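/- For every ν ∈ (0,1] and every k = (k₁,k₂,k₃) ∈ ℤ³ with k₃ ≠ 0, one has |M̂₂^ν(k)| ≤ 3|k|, i.e. |−k₁k₃|k|² − k₂k₃(k₂² + ν|k|⁴)| ≤ 3|k| · (|k|²k₃² + (k₂² + ν|k|⁴)²). -/

import Mathlib

/-- Euclidean norm of a lattice point `k = (k₁, k₂, k₃) ∈ ℤ³`. -/
noncomputable def knorm (k : ℤ × ℤ × ℤ) : ℝ :=
  Real.sqrt (((k.1 : ℝ)) ^ 2 + ((k.2.1 : ℝ)) ^ 2 + ((k.2.2 : ℝ)) ^ 2)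

/-- Denominator `D_ν(k) = |k|²k₃² + (k₂² + ν|k|⁴)²`. -/
noncomputable def Dnu (ν : ℝ) (k : ℤ × ℤ × ℤ) : ℝ :=
  (knorm k) ^ 2 * ((k.2.2 : ℝ)) ^ 2 + (((k.2.1 : ℝ)) ^ 2 + ν * (knorm k) ^ 4) ^ 2

/-- First component of the magnetogeostrophic symbol. -/
noncomputable def Mhat1 (ν : ℝ) (k : ℤ × ℤ × ℤ) : ℝ :=
  ((k.2.1 : ℝ) * (k.2.2 : ℝ) * (knorm k) ^ 2
    - (k.1 : ℝ) * (k.2.2 : ℝ) * (((k.2.1 : ℝ)) ^ 2 + ν * (knorm k) ^ 4)) / Dnu ν k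

/-- Second component of the magnetogeostrophic symbol. -/
noncomputable def Mhat2 (ν : ℝ) (k : ℤ × ℤ × ℤ) : ℝ :=
  (-(k.1 : ℝ) * (k.2.2 : ℝ) * (knorm k) ^ 2
    - (k.2.1 : ℝ) * (k.2.2 : ℝ) * (((k.2.1 : ℝ)) ^ 2 + ν * (knorm k) ^ 4)) / Dnu ν k

/-- Third component of the magnetogeostrophic symbol. -/
noncomputable def Mhat3 (ν : ℝ) (k : ℤ × ℤ × ℤ) : ℝ :=
  (((k.1 : ℝ) ^ 2 + (k.2.1 : ℝ) ^ 2) * (((k.2.1 : ℝ)) ^ 2 + ν * (knorm k) ^ 4)) / Dnu ν k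

/-!
Write `s = |k|` and `B = k₂² + ν|k|⁴ ≥ 0`. Each coordinate is at most `s` in absolute value, and
`|k₃| ≥ 1` because `k₃` is a nonzero integer, so `|k₃| ≤ k₃²` and `s ≥ 1`. Hence
`|k₁k₃|s² ≤ s·s²k₃²`, and by AM-GM `|k₂k₃|B ≤ s(k₃² + B²) ≤ s(s²k₃² + B²)`; together the numerator
is at most `2s·D_ν(k)`.
-/

lemma abs_neg_mul_sub_mul_le {a b c s B : ℝ} (ha : |a| ≤ s) (hb : |b| ≤ s) (hc : 1 ≤ |c|)
    (hcs : |c| ≤ s) (hB : 0 ≤ B) :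
    |-a * c * s ^ 2 - b * c * B| ≤ 3 * s * (s ^ 2 * c ^ 2 + B ^ 2) := by
  have hs : 1 ≤ s := hc.trans hcs
  have hc_sq : |c| ≤ c ^ 2 := by nlinarith [sq_abs c]
  have h₁ : |a| * |c| * s ^ 2 ≤ s * (s ^ 2 * c ^ 2) :=
    calc |a| * |c| * s ^ 2 ≤ s * c ^ 2 * s ^ 2 := by gcongr
      _ = s * (s ^ 2 * c ^ 2) := by ring
  have h₂ : |b| * |c| * B ≤ s * (s ^ 2 * c ^ 2 + B ^ 2) := by
    have amgm : |c| * B ≤ c ^ 2 + B ^ 2 := by nlinarith [sq_nonneg (|c| - B), sq_abs c]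
    have : c ^ 2 ≤ s ^ 2 * c ^ 2 := le_mul_of_one_le_left (sq_nonneg c) (one_le_pow₀ hs)
    calc |b| * |c| * B = |b| * (|c| * B) := by ring
      _ ≤ s * (c ^ 2 + B ^ 2) := by gcongr
      _ ≤ s * (s ^ 2 * c ^ 2 + B ^ 2) := by gcongr
  calc |-a * c * s ^ 2 - b * c * B| = |a * c * s ^ 2 + b * c * B| := by
        rw [← abs_neg]; ring_nf
    _ ≤ |a * c * s ^ 2| + |b * c * B| := abs_add_le _ _
    _ = |a| * |c| * s ^ 2 + |b| * |c| * B := by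
        simp only [abs_mul, abs_pow, abs_of_nonneg hB, sq_abs]
    _ ≤ 3 * s * (s ^ 2 * c ^ 2 + B ^ 2) := by
        have : 0 ≤ s * (s ^ 2 * c ^ 2) := by positivity
        have : 0 ≤ s * B ^ 2 := by positivity
        linarith

lemma abs_fst_le_knorm (k : ℤ × ℤ × ℤ) : |(k.1 : ℝ)| ≤ knorm k :=
  Real.abs_le_sqrt (by nlinarith [sq_nonneg (k.2.1 : ℝ), sq_nonneg (k.2.2 : ℝ)])

lemma abs_snd_fst_le_knorm (k : ℤ × ℤ × ℤ) : |(k.2.1 : ℝ)| ≤ knorm k :=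
  Real.abs_le_sqrt (by nlinarith [sq_nonneg (k.1 : ℝ), sq_nonneg (k.2.2 : ℝ)])

lemma abs_snd_snd_le_knorm (k : ℤ × ℤ × ℤ) : |(k.2.2 : ℝ)| ≤ knorm k :=
  Real.abs_le_sqrt (by nlinarith [sq_nonneg (k.1 : ℝ), sq_nonneg (k.2.1 : ℝ)])

lemma one_le_abs_intCast {n : ℤ} (hn : n ≠ 0) : 1 ≤ |(n : ℝ)| := by
  exact_mod_cast Int.one_le_abs hn

lemma Dnu_pos {ν : ℝ} {k : ℤ × ℤ × ℤ} (hk3 : k.2.2 ≠ 0) : 0 < Dnu ν k := by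
  have hs : 0 < knorm k :=
    zero_lt_one.trans_le ((one_le_abs_intCast hk3).trans (abs_snd_snd_le_knorm k))
  unfold Dnu
  positivity

theorem stmt3 (ν : ℝ) (hν : ν ∈ Set.Ioc (0 : ℝ) 1) (k : ℤ × ℤ × ℤ)
    (hk3 : k.2.2 ≠ 0) :
    |Mhat2 ν k| ≤ 3 * knorm k ∧
      |-(k.1 : ℝ) * (k.2.2 : ℝ) * (knorm k) ^ 2
          - (k.2.1 : ℝ) * (k.2.2 : ℝ) * (((k.2.1 : ℝ)) ^ 2 + ν * (knorm k) ^ 4)|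
        ≤ 3 * knorm k *
          ((knorm k) ^ 2 * ((k.2.2 : ℝ)) ^ 2
            + (((k.2.1 : ℝ)) ^ 2 + ν * (knorm k) ^ 4) ^ 2) := by
  have hB : 0 ≤ (k.2.1 : ℝ) ^ 2 + ν * knorm k ^ 4 := by
    have := hν.1.le
    positivity
  have numerator_le := abs_neg_mul_sub_mul_le (abs_fst_le_knorm k) (abs_snd_fst_le_knorm k)
    (one_le_abs_intCast hk3) (abs_snd_snd_le_knorm k) hB
  refine ⟨?_, numerator_le⟩
  have hD : 0 < Dnu ν k := Dnu_pos hk3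
  rw [Mhat2, abs_div, abs_of_pos hD, div_le_iff₀ hD]
  exact numerator_le
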